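/- arXiv:2407.19974 — 2 statements merged into one kernel-verified Lean document; each statement's English description precedes it below -/
import Mathlib

section
/- Let m ≥ 2 be an even integer and K a totally real number field with discriminant Δ. Then there exists a finite set S ⊆ O_K^+ with N_{K/ℚ}(α) ≤ Δ^{m/2} for every α ∈ S, such that every γ ∈ O_K^+ can be written as γ = α·x^m + β₁^m + ⋯ + β_r^m for some α ∈ S, some integer r ≥ 0, and some x, β₁, …, β_r ∈ O_K. -/
/-!
If `N(γ) > Δ^{m/2}`, Minkowski's convex body theorem applied to the box `|σ x| < σ(γ)^{1/m}`,
whose volume `2ⁿ N(γ)^{1/m}` exceeds `2ⁿ √Δ`, yields a nonzero `x ∈ 𝓞 K` with `σ(x)^m < σ(γ)`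
for every embedding `σ`. As `m` is even, `γ - x^m` is again totally positive, of smaller norm.
Iterating, `γ = δ + ∑ βᵢ^m` with `δ` totally positive of norm at most `Δ^{m/2}`. Such `δ`
generate finitely many ideals, and `(𝓞 K)ˣ / (𝓞 K)ˣ^m` is finite by Dirichlet's unit theorem,
so up to `m`-th powers of units there are only finitely many `δ`; `S` is a set of representatives.
-/

open NumberField NumberField.InfinitePlace

theorem exists_finset_subset_forall_eq_mul_unit_pow {R : Type*} [CommRing R] [IsDomain R] {m : ℕ}
    [(powMonoidHom m : Rˣ →* Rˣ).range.FiniteIndex] {s : Set R}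
    (hs : ((fun a => Ideal.span {a}) '' s).Finite) :
    ∃ T : Finset R, ↑T ⊆ s ∧ ∀ a ∈ s, ∃ b ∈ T, ∃ u : Rˣ, a = b * u ^ m := by
  classical
  -- `a` is determined up to `m`-th powers of units by `span {a}` together with the class in
  -- `Rˣ ⧸ (Rˣ)^m` of the unit relating it to a fixed generator of `span {a}`.
  let span (a : R) := Ideal.span {a}
  let gen := Function.invFun span
  have hgen (a : R) : Associated (gen (span a)) a :=
    Ideal.span_singleton_eq_span_singleton.mp (Function.invFun_eq (f := span) ⟨a, rfl⟩)
  choose u hu using hgen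
  let F (a : R) : Ideal R × (Rˣ ⧸ (powMonoidHom m : Rˣ →* Rˣ).range) := (span a, u a)
  have hF : (F '' s).Finite :=
    (hs.prod Set.finite_univ).subset <| by rintro _ ⟨a, ha, rfl⟩; exact ⟨⟨a, ha, rfl⟩, trivial⟩
  obtain ⟨T, hTs, -, hT⟩ :=
    Finset.exists_subset_injOn_image_eq_of_surjOn s hF.toFinset
      (by rw [Set.Finite.coe_toFinset]; exact Set.surjOn_image F s)
  refine ⟨T, hTs, fun a ha => ?_⟩
  obtain ⟨b, hbT, hba⟩ : ∃ b ∈ T, F b = F a := by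
    rw [← Finset.mem_image, hT, Set.Finite.mem_toFinset]
    exact Set.mem_image_of_mem F ha
  obtain ⟨w, hw⟩ := QuotientGroup.eq.mp (congrArg Prod.snd hba)
  have hspan : span b = span a := congrArg Prod.fst hba
  have hua : u a = u b * w ^ m := by rw [← powMonoidHom_apply, hw, mul_inv_cancel_left]
  refine ⟨b, hbT, w, ?_⟩
  calc a = gen (span b) * u b * (w ^ m : Rˣ) := by
        rw [← hu a, ← hspan, hua, Units.val_mul, mul_assoc]
    _ = b * w ^ m := by rw [hu b, Units.val_pow_eq_pow_val]

namespace NumberField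

variable {K : Type*} [Field K]

theorem isTotallyReal_of_forall_im_eq_zero (hK : ∀ σ : K →+* ℂ, ∀ x : K, (σ x).im = 0) :
    IsTotallyReal K where
  isReal w := by
    rw [← mk_embedding w, isReal_mk_iff, ComplexEmbedding.isReal_iff]
    ext x
    exact Complex.conj_eq_iff_im.mpr (hK _ x)

def IsTotallyPositive (x : K) : Prop := ∀ σ : K →+* ℂ, 0 < (σ x).re

theorem finite_image_span_setOf_abs_norm_le [NumberField K] (B : ℚ) :
    ((fun a => Ideal.span {a}) '' {a : 𝓞 K | |Algebra.norm ℚ (a : K)| ≤ B}).Finite := by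
  refine (Ideal.finite_setOfPred_absNorm_le ⌊B⌋₊).subset ?_
  rintro _ ⟨a, ha, rfl⟩
  rw [Set.mem_ofPred_eq, Ideal.absNorm_span_singleton]
  apply Nat.le_floor
  rw [Nat.cast_natAbs, Int.cast_abs, Algebra.coe_norm_int]
  exact ha

namespace IsTotallyReal

variable [IsTotallyReal K]

theorem ofReal_re_apply (σ : K →+* ℂ) (x : K) : ((σ x).re : ℂ) = σ x :=
  (IsTotallyReal.complexEmbedding_isReal σ).coe_embedding_apply x

theorem mk_apply (σ : K →+* ℂ) (x : K) : InfinitePlace.mk σ x = |(σ x).re| := by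
  rw [apply, ← Real.norm_eq_abs, ← Complex.norm_real, ofReal_re_apply]

theorem re_apply_sub_pow (σ : K →+* ℂ) (x y : K) (m : ℕ) :
    (σ (x - y ^ m)).re = (σ x).re - (σ y).re ^ m :=
  let e := (IsTotallyReal.complexEmbedding_isReal σ).embedding
  show e (x - y ^ m) = e x - e y ^ m by rw [map_sub, map_pow]

theorem re_apply_ne_zero (σ : K →+* ℂ) {x : K} (hx : x ≠ 0) : (σ x).re ≠ 0 := by
  rw [← Complex.ofReal_ne_zero, ofReal_re_apply]
  exact (map_ne_zero σ).mpr hx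

variable [NumberField K]

theorem norm_eq_prod_re (x : K) : (Algebra.norm ℚ x : ℝ) = ∏ σ : K →+* ℂ, (σ x).re := by
  apply Complex.ofReal_injective
  rw [Complex.ofReal_prod]
  simp_rw [ofReal_re_apply]
  rw [Complex.ofReal_ratCast, ← eq_ratCast (algebraMap ℚ ℂ), Algebra.norm_eq_prod_embeddings ℚ ℂ x]
  exact Fintype.prod_equiv (RingHom.equivRatAlgHom K ℂ).symm _ _ fun _ => rfl

theorem discr_pos : 0 < discr K := by
  have := sign_discr K
  rw [nrComplexPlaces_eq_zero, pow_zero] at this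
  exact Int.sign_eq_one_iff_pos.mp this

end IsTotallyReal

namespace IsTotallyPositive

variable [IsTotallyReal K] {x : K}

theorem mk_apply (hx : IsTotallyPositive x) (σ : K →+* ℂ) : InfinitePlace.mk σ x = (σ x).re := by
  rw [IsTotallyReal.mk_apply, abs_of_pos (hx σ)]

variable [NumberField K]

theorem norm_pos (hx : IsTotallyPositive x) : 0 < Algebra.norm ℚ x := by
  have : (0 : ℝ) < Algebra.norm ℚ x := by
    rw [IsTotallyReal.norm_eq_prod_re]
    exact Finset.prod_pos fun σ _ => hx σ
  exact_mod_cast this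

theorem norm_lt_norm {y : K} (hx : IsTotallyPositive x) (h : ∀ σ : K →+* ℂ, (σ x).re < (σ y).re) :
    Algebra.norm ℚ x < Algebra.norm ℚ y := by
  have : (Algebra.norm ℚ x : ℝ) < Algebra.norm ℚ y := by
    rw [IsTotallyReal.norm_eq_prod_re, IsTotallyReal.norm_eq_prod_re]
    exact Finset.prod_lt_prod_of_nonempty (fun σ _ => hx σ) (fun σ _ => h σ) Finset.univ_nonempty
  exact_mod_cast this

end IsTotallyPositive

section Minkowski

open MeasureTheory mixedEmbedding

variable [NumberField K] [IsTotallyReal K]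

theorem exists_ne_zero_lt_of_sqrt_abs_discr_lt {f : InfinitePlace K → NNReal}
    (h : √|(discr K : ℝ)| < ∏ w, (f w : ℝ)) :
    ∃ x : 𝓞 K, x ≠ 0 ∧ ∀ w : InfinitePlace K, w x < f w := by
  classical
  apply exists_ne_zero_mem_ringOfIntegers_lt K
  rw [convexBodyLT_volume, minkowskiBound, volume_fundamentalDomain_fractionalIdealLatticeBasis,
    volume_fundamentalDomain_latticeBasis, mixedEmbedding.finrank]
  simp only [Units.val_one, map_one, Rat.cast_one, ENNReal.ofReal_one, one_mul, pow_zero,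
    IsTotallyReal.nrComplexPlaces_eq_zero, IsTotallyReal.finrank, convexBodyLTFactor, mul_one,
    ENNReal.coe_pow, ENNReal.coe_ofNat, IsTotallyReal.mult_eq, pow_one]
  rw [mul_comm]
  gcongr
  · simp
  rw [← NNReal.coe_lt_coe, NNReal.coe_prod, Real.coe_sqrt, coe_nnnorm,
    Int.norm_eq_abs, ← Int.cast_abs]
  exact_mod_cast h

theorem exists_ne_zero_pow_lt_of_sqrt_abs_discr_pow_lt {m : ℕ} (hm : m ≠ 0) {y : K}
    (h : √|(discr K : ℝ)| ^ m < |(Algebra.norm ℚ y : ℝ)|) :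
    ∃ x : 𝓞 K, x ≠ 0 ∧ ∀ w : InfinitePlace K, w x ^ m < w y := by
  have hm' : (0 : ℝ) < m := by positivity
  have hroot (a b : ℝ) (ha : 0 ≤ a) (hb : 0 ≤ b) : a < b ^ (m⁻¹ : ℝ) ↔ a ^ m < b := by
    rw [Real.lt_rpow_inv_iff_of_pos ha hb hm', Real.rpow_natCast]
  have hroot_nonneg (w : InfinitePlace K) : 0 ≤ w y ^ (m⁻¹ : ℝ) := by positivity
  obtain ⟨x, hx0, hx⟩ := exists_ne_zero_lt_of_sqrt_abs_discr_lt
    (f := fun w => (w y ^ (m⁻¹ : ℝ)).toNNReal) (by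
      simp only [Real.coe_toNNReal _ (hroot_nonneg _)]
      rw [Real.finsetProd_rpow _ _ fun w _ => by positivity, hroot _ _ (by positivity)
        (by positivity)]
      simpa [← Rat.cast_abs, ← prod_eq_abs_norm] using h)
  refine ⟨x, hx0, fun w => (hroot _ _ (by positivity) (by positivity)).mp ?_⟩
  simpa only [Real.coe_toNNReal _ (hroot_nonneg w)] using hx w

end Minkowski

namespace IsTotallyPositive

variable [NumberField K] [IsTotallyReal K] {m : ℕ}

theorem exists_norm_sub_pow_lt (hm : m ≠ 0) (hme : Even m) {γ : K}
    (hγ : IsTotallyPositive γ) (hbig : (discr K : ℚ) ^ (m / 2) < Algebra.norm ℚ γ) :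
    ∃ x : 𝓞 K, IsTotallyPositive (γ - (x : K) ^ m) ∧
      Algebra.norm ℚ (γ - (x : K) ^ m) < Algebra.norm ℚ γ := by
  have hsqrt : √|(discr K : ℝ)| ^ m = (discr K : ℝ) ^ (m / 2) := by
    obtain ⟨k, rfl⟩ := hme
    rw [← two_mul, pow_mul, Real.sq_sqrt (abs_nonneg _),
      abs_of_pos (by exact_mod_cast IsTotallyReal.discr_pos), Nat.mul_div_cancel_left _ two_pos]
  obtain ⟨x, hx0, hx⟩ := exists_ne_zero_pow_lt_of_sqrt_abs_discr_pow_lt hm (y := γ) (by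
    rw [hsqrt, abs_of_pos (by exact_mod_cast hγ.norm_pos)]
    exact_mod_cast hbig)
  have hxσ (σ : K →+* ℂ) : 0 < (σ x).re ^ m ∧ (σ x).re ^ m < (σ γ).re := by
    refine ⟨hme.pow_pos (IsTotallyReal.re_apply_ne_zero σ (by exact_mod_cast hx0)), ?_⟩
    have := hx (InfinitePlace.mk σ)
    rwa [IsTotallyReal.mk_apply, hγ.mk_apply, hme.pow_abs] at this
  have hpos : IsTotallyPositive (γ - (x : K) ^ m) := fun σ => by
    linarith [IsTotallyReal.re_apply_sub_pow σ γ x m, hxσ σ]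
  exact ⟨x, hpos, hpos.norm_lt_norm fun σ => by
    linarith [IsTotallyReal.re_apply_sub_pow σ γ x m, hxσ σ]⟩

theorem exists_eq_add_sum_pow (hm : m ≠ 0) (hme : Even m) {γ : 𝓞 K}
    (hγ : IsTotallyPositive (γ : K)) :
    ∃ δ : 𝓞 K, (IsTotallyPositive (δ : K) ∧ Algebra.norm ℚ (δ : K) ≤ (discr K : ℚ) ^ (m / 2)) ∧
      ∃ r, ∃ β : Fin r → 𝓞 K, γ = δ + ∑ i, β i ^ m := by
  induction hn : (Algebra.norm ℤ γ).natAbs using Nat.strong_induction_on generalizing γ with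
  | _ n ih =>
  by_cases hle : Algebra.norm ℚ (γ : K) ≤ (discr K : ℚ) ^ (m / 2)
  · exact ⟨γ, ⟨hγ, hle⟩, 0, Fin.elim0, by simp⟩
  obtain ⟨x, hpos, hlt⟩ := hγ.exists_norm_sub_pow_lt hm hme (not_le.mp hle)
  have hpos' : IsTotallyPositive ((γ - x ^ m : 𝓞 K) : K) := by push_cast; exact hpos
  have hdesc : (Algebra.norm ℤ (γ - x ^ m)).natAbs < n := by
    have hcast (a : 𝓞 K) : (Algebra.norm ℤ a : ℚ) = Algebra.norm ℚ (a : K) :=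
      Algebra.coe_norm_int a
    rw [← hn]
    apply Int.natAbs_lt_natAbs_of_nonneg_of_lt
    · exact Int.cast_nonneg_iff.mp (hcast _ ▸ hpos'.norm_pos.le)
    · rw [← Int.cast_lt (R := ℚ), hcast, hcast]
      push_cast
      exact hlt
  obtain ⟨δ, hδ, r, β, hβ⟩ := ih _ hdesc hpos' rfl
  refine ⟨δ, hδ, r + 1, Fin.cons x β, ?_⟩
  rw [Fin.sum_univ_succ]
  simp only [Fin.cons_zero, Fin.cons_succ]
  linear_combination hβ

end IsTotallyPositive

end NumberField

theorem waring_like_representation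
    (m : ℕ) (hm : 2 ≤ m) (hme : Even m)
    (K : Type*) [Field K] [NumberField K]
    -- K is totally real
    (hK : ∀ σ : K →+* ℂ, ∀ x : K, (σ x).im = 0) :
    ∃ S : Finset (𝓞 K),
      -- S consists of totally positive integers of norm at most Δ^{m/2}
      (∀ α ∈ S, (∀ σ : K →+* ℂ, 0 < (σ (α : K)).re) ∧
        Algebra.norm ℚ (α : K) ≤ ((discr K : ℚ)) ^ (m / 2)) ∧
      -- every totally positive γ ∈ O_K is of the form α·x^m + β₁^m + ⋯ + β_r^m
      ∀ γ : 𝓞 K, (∀ σ : K →+* ℂ, 0 < (σ (γ : K)).re) →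
        ∃ α ∈ S, ∃ x : 𝓞 K, ∃ r : ℕ, ∃ β : Fin r → 𝓞 K,
          γ = α * x ^ m + ∑ i, (β i) ^ m := by
  have := isTotallyReal_of_forall_im_eq_zero hK
  have : Group.FG (𝓞 K)ˣ := Group.fg_iff_monoid_fg.mpr inferInstance
  have := Subgroup.finiteIndex_range_powMonoidHom_of_fg (𝓞 K)ˣ (n := m) (by omega)
  let small :=
    {a : 𝓞 K | IsTotallyPositive (a : K) ∧ Algebra.norm ℚ (a : K) ≤ (discr K : ℚ) ^ (m / 2)}
  have hsmall : ((fun a => Ideal.span {a}) '' small).Finite :=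
    (finite_image_span_setOf_abs_norm_le _).subset <|
      Set.image_mono fun a ha => (abs_of_pos ha.1.norm_pos).trans_le ha.2
  obtain ⟨S, hSsmall, hS⟩ := exists_finset_subset_forall_eq_mul_unit_pow (m := m) hsmall
  refine ⟨S, fun α hα => hSsmall hα, fun γ hγ => ?_⟩
  obtain ⟨δ, hδ, r, β, rfl⟩ := IsTotallyPositive.exists_eq_add_sum_pow (by omega) hme hγ
  obtain ⟨α, hα, u, rfl⟩ := hS δ hδ
  exact ⟨α, hα, u, r, β, rfl⟩
end

section
/- Let n ≥ 1 and let m ≥ 2 be even, K a totally real number field, O an order in K, and f ∈ K[x₁,…,xₙ] a totally positive definite homogeneous polynomial of degree m. Then there exists a positive integer C such that for every vector v ∈ Oⁿ one has house(v)^m ≤ C · house(f(v)). -/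
/-!
Under a real embedding `τ`, the form `f` becomes a positive definite real form, so by compactness
of the unit sphere and homogeneity it dominates `ε ‖x‖ ^ m` for some `ε > 0`. Total reality makes
every complex embedding `σ` real, with `|σ(α)| = |τ(α)|`; evaluating this bound at the embedding
and the coordinate that realize `house(v)` and taking the smallest `ε` over the finitely many
embeddings gives the theorem.
-/

open MvPolynomial

/-- The house of an algebraic number `α`: the maximum of `|σ(α)|` over the
embeddings `σ` into `ℂ` (for an element of a field `K` of algebraic numbers, the
embeddings of `K` restrict to exactly the embeddings of `ℚ(α)`, giving the same
set of values). -/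
noncomputable def house' {K : Type*} [Field K] (α : K) : ℝ :=
  ⨆ σ : K →+* ℂ, ‖σ α‖

theorem MvPolynomial.IsHomogeneous.eval_smul {σ R : Type*} [CommSemiring R]
    {g : MvPolynomial σ R} {m : ℕ} (hg : g.IsHomogeneous m) (c : R) (x : σ → R) :
    eval (c • x) g = c ^ m * eval x g := by
  rw [eval_eq, eval_eq, Finset.mul_sum]
  refine Finset.sum_congr rfl fun d hd => ?_
  have hdeg : ∑ i ∈ d.support, d i = m := by
    rw [← hg (mem_support_iff.mp hd), Pi.one_def, ← Finsupp.degree_eq_weight_one,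
      Finsupp.degree_apply]
  simp only [Pi.smul_apply, smul_eq_mul, mul_pow, Finset.prod_mul_distrib,
    Finset.prod_pow_eq_pow_sum, hdeg]
  ring

theorem exists_pos_mul_norm_pow_le_of_homogeneous {E : Type*} [NormedAddCommGroup E]
    [NormedSpace ℝ E] [FiniteDimensional ℝ E] [Nontrivial E] {F : E → ℝ} {m : ℕ}
    (hF : Continuous F) (hhom : ∀ c : ℝ, 0 ≤ c → ∀ x, F (c • x) = c ^ m * F x)
    (hpos : ∀ x, x ≠ 0 → 0 < F x) :
    ∃ ε > 0, ∀ x, ε * ‖x‖ ^ m ≤ F x := by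
  obtain ⟨x₀, hx₀, hmin⟩ := (isCompact_sphere (0 : E) 1).exists_isMinOn
    (NormedSpace.sphere_nonempty.mpr zero_le_one) hF.continuousOn
  have hx₀ne : x₀ ≠ 0 := ne_zero_of_mem_unit_sphere ⟨x₀, hx₀⟩
  refine ⟨F x₀, hpos x₀ hx₀ne, fun x => ?_⟩
  obtain ⟨y, hy, hxy⟩ : ∃ y ∈ Metric.sphere (0 : E) 1, x = ‖x‖ • y := by
    by_cases hx : x = 0
    · exact ⟨x₀, hx₀, by simp [hx]⟩
    · refine ⟨‖x‖⁻¹ • x, ?_, ?_⟩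
      · rw [mem_sphere_zero_iff_norm, norm_smul, norm_inv, norm_norm,
          inv_mul_cancel₀ (norm_ne_zero_iff.mpr hx)]
      · rw [smul_smul, mul_inv_cancel₀ (norm_ne_zero_iff.mpr hx), one_smul]
  calc F x₀ * ‖x‖ ^ m ≤ ‖x‖ ^ m * F y := by rw [mul_comm]; gcongr; exact hmin hy
    _ = F x := by rw [← hhom _ (norm_nonneg x), ← hxy]

theorem MvPolynomial.IsHomogeneous.exists_pos_mul_abs_pow_le {ι R : Type*} [Fintype ι]
    [Nonempty ι] [CommRing R] {f : MvPolynomial ι R} {m : ℕ} (hf : f.IsHomogeneous m)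
    (τ : R →+* ℝ) (hpd : ∀ x : ι → ℝ, x ≠ 0 → 0 < eval x (map τ f)) :
    ∃ ε > 0, ∀ (v : ι → R) (i : ι), ε * |τ (v i)| ^ m ≤ τ (eval v f) := by
  obtain ⟨ε, hε, hle⟩ := exists_pos_mul_norm_pow_le_of_homogeneous (continuous_eval _)
    (fun c _ x => (hf.map τ).eval_smul c x) hpd
  refine ⟨ε, hε, fun v i => ?_⟩
  calc ε * |τ (v i)| ^ m ≤ ε * ‖τ ∘ v‖ ^ m := by gcongr; exact norm_le_pi_norm (τ ∘ v) i
    _ ≤ eval (τ ∘ v) (map τ f) := hle _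
    _ = τ (eval v f) := by rw [eval_map, eval₂_comp]

theorem NumberField.ComplexEmbedding.exists_ringHom_real_norm_eq_abs {K : Type*} [Field K]
    {σ : K →+* ℂ} (hσ : ∀ x, (σ x).im = 0) : ∃ τ : K →+* ℝ, ∀ x, ‖σ x‖ = |τ x| := by
  have hreal : IsReal σ :=
    isReal_iff.mpr (RingHom.ext fun x => Complex.conj_eq_iff_im.mpr (hσ x))
  exact ⟨hreal.embedding, fun x => by
    rw [← hreal.coe_embedding_apply, Complex.norm_real, Real.norm_eq_abs]⟩

section House

variable {K : Type*} [Field K]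

theorem house'_nonneg (α : K) : 0 ≤ house' α :=
  Real.iSup_nonneg fun _ => norm_nonneg _

variable [NumberField K]

theorem norm_le_house' (α : K) (σ : K →+* ℂ) : ‖σ α‖ ≤ house' α :=
  le_ciSup (f := fun σ : K →+* ℂ => ‖σ α‖) (Set.finite_range _).bddAbove σ

theorem exists_norm_eq_house' (α : K) : ∃ σ : K →+* ℂ, ‖σ α‖ = house' α :=
  exists_eq_ciSup_of_finite

theorem exists_pos_mul_iSup_house'_pow_le {ι : Type*} [Fintype ι] [Nonempty ι]
    (hK : ∀ σ : K →+* ℂ, ∀ x : K, (σ x).im = 0) {f : MvPolynomial ι K} {m : ℕ}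
    (hf : f.IsHomogeneous m) (hpd : ∀ τ : K →+* ℝ, ∀ x : ι → ℝ, x ≠ 0 → 0 < eval x (map τ f)) :
    ∃ ε > 0, ∀ v : ι → K, ε * (⨆ i, house' (v i)) ^ m ≤ house' (eval v f) := by
  choose τ hτ using fun σ => NumberField.ComplexEmbedding.exists_ringHom_real_norm_eq_abs (hK σ)
  choose ε hε hle using fun σ => hf.exists_pos_mul_abs_pow_le (τ σ) (hpd (τ σ))
  obtain ⟨σmin, hσmin⟩ := Finite.exists_min ε
  refine ⟨ε σmin, hε σmin, fun v => ?_⟩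
  obtain ⟨i, hi⟩ := exists_eq_ciSup_of_finite (f := fun i => house' (v i))
  obtain ⟨σ, hσ⟩ := exists_norm_eq_house' (v i)
  calc ε σmin * (⨆ i, house' (v i)) ^ m = ε σmin * |τ σ (v i)| ^ m := by rw [← hi, ← hσ, hτ]
    _ ≤ ε σ * |τ σ (v i)| ^ m := by gcongr; exact hσmin σ
    _ ≤ τ σ (eval v f) := hle σ v i
    _ ≤ |τ σ (eval v f)| := le_abs_self _
    _ = ‖σ (eval v f)‖ := (hτ σ _).symm
    _ ≤ house' (eval v f) := norm_le_house' _ σ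

end House

theorem house_pow_le_mul_house_general
    (n m : ℕ) (hn : 1 ≤ n)
    (K : Type*) [Field K] [NumberField K]
    -- K is totally real
    (hK : ∀ σ : K →+* ℂ, ∀ x : K, (σ x).im = 0)
    -- O is an order in K
    (O : Subalgebra ℤ K)
    (f : MvPolynomial (Fin n) K) (hf : f.IsHomogeneous m)
    -- f is totally positive definite
    (hpd : ∀ σ : K →+* ℝ, ∀ x : Fin n → ℝ, x ≠ 0 → 0 < eval x (map σ f)) :
    ∃ C : ℕ, 0 < C ∧
      ∀ v : Fin n → K, (∀ i, v i ∈ O) →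
        (⨆ i, house' (v i)) ^ m ≤ (C : ℝ) * house' (eval v f) := by
  have : Nonempty (Fin n) := ⟨⟨0, hn⟩⟩
  obtain ⟨ε, hε, hle⟩ := exists_pos_mul_iSup_house'_pow_le hK hf hpd
  refine ⟨⌈ε⁻¹⌉₊, Nat.ceil_pos.mpr (inv_pos.mpr hε), fun v _ => ?_⟩
  calc (⨆ i, house' (v i)) ^ m = ε⁻¹ * (ε * (⨆ i, house' (v i)) ^ m) := by field_simp
    _ ≤ ε⁻¹ * house' (eval v f) := by gcongr; exact hle v
    _ ≤ ⌈ε⁻¹⌉₊ * house' (eval v f) := by gcongr; exacts [house'_nonneg _, Nat.le_ceil _]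

theorem house_pow_le_mul_house
    (n m : ℕ) (hn : 1 ≤ n) (hm : 2 ≤ m) (hme : Even m)
    (K : Type*) [Field K] [NumberField K]
    -- K is totally real
    (hK : ∀ σ : K →+* ℂ, ∀ x : K, (σ x).im = 0)
    -- O is an order in K
    (O : Subalgebra ℤ K)
    (hOint : ∀ x ∈ O, IsIntegral ℤ x)
    (hOfrac : ∀ x : K, ∃ a ∈ O, ∃ b ∈ O, b ≠ 0 ∧ x = a / b)
    (f : MvPolynomial (Fin n) K) (hf : f.IsHomogeneous m)
    -- f is totally positive definite
    (hpd : ∀ σ : K →+* ℝ, ∀ x : Fin n → ℝ, x ≠ 0 → 0 < eval x (map σ f)) :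
    ∃ C : ℕ, 0 < C ∧
      ∀ v : Fin n → K, (∀ i, v i ∈ O) →
        (⨆ i, house' (v i)) ^ m ≤ (C : ℝ) * house' (eval v f) :=
  house_pow_le_mul_house_general n m hn K hK O f hf hpd
end
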